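/- arXiv:1810.05760 — 4 statements merged into one kernel-verified Lean document; each statement's English description precedes it below -/
import Mathlib

section
/- Small gain theorem: Suppose s¹,...,sᵐ are sequences of nonnegative real numbers (e.g., norms of vector sequences) such that for every K and each i, sup_{0≤k≤K} λ^{-k} s^{(i mod m)+1}(k) ≤ γᵢ · sup_{0≤k≤K} λ^{-k} sⁱ(k) + ωᵢ, where γᵢ ≥ 0 and ωᵢ are constants independent of K, and γ₁γ₂⋯γₘ < 1. Then sup_{k≥0} λ^{-k} s¹(k) ≤ (ω₁γ₂γ₃⋯γₘ + ω₂γ₃⋯γₘ + ⋯ + ω_{m-1}γₘ + ωₘ)/(1 - γ₁γ₂⋯γₘ). -/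
/-!
Write `F i K` for the weighted running supremum `sup_{k ≤ K} λ^{-k} s i k`, a finite number.
Going once around the cycle of hypotheses, starting and ending at `F 0 K`, gives
`F 0 K ≤ (∏ γ) F 0 K + C` with `C = ∑ i, ω i ∏_{j > i} γ j`; as `∏ γ < 1` this bounds
`F 0 K` by `C / (1 - ∏ γ)` uniformly in `K`, and every term `λ^{-k} s 0 k` is at most `F 0 k`.
-/

open Finset

theorem le_prod_mul_add_sum_of_succ_le {R : Type*} [CommSemiring R] [PartialOrder R]
    [IsOrderedRing R] {x g w : ℕ → R} (hg : ∀ n, 0 ≤ g n)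
    (hx : ∀ n, x (n + 1) ≤ g n * x n + w n) (n : ℕ) :
    x n ≤ (∏ j ∈ range n, g j) * x 0 + ∑ i ∈ range n, w i * ∏ j ∈ Ico (i + 1) n, g j := by
  induction n with
  | zero => simp
  | succ n ih =>
    have hsum : ∑ i ∈ range n, w i * ∏ j ∈ Ico (i + 1) (n + 1), g j
        = g n * ∑ i ∈ range n, w i * ∏ j ∈ Ico (i + 1) n, g j := by
      rw [mul_sum]
      refine sum_congr rfl fun i hi => ?_
      rw [prod_Ico_succ_top (mem_range.mp hi)]
      ring
    calc x (n + 1) ≤ g n * x n + w n := hx n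
      _ ≤ g n * ((∏ j ∈ range n, g j) * x 0
            + ∑ i ∈ range n, w i * ∏ j ∈ Ico (i + 1) n, g j) + w n := by
        gcongr; exact hg n
      _ = _ := by
        rw [prod_range_succ, sum_range_succ, hsum, Ico_self, prod_empty]
        ring

theorem Fin.prod_Ioi_eq_prod_Ico_val {M : Type*} [CommMonoid M] {m : ℕ} (f : ℕ → M)
    (i : Fin m) : ∏ j ∈ Ioi i, f j = ∏ j ∈ Ico (i + 1 : ℕ) m, f j := by
  rw [Ico_add_one_left_eq_Ioo, ← Fin.map_valEmbedding_Ioi, prod_map]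
  rfl

open Fin.NatCast in
theorem Fin.le_prod_mul_add_sum_of_cyclic {R : Type*} [CommSemiring R] [PartialOrder R]
    [IsOrderedRing R] {m : ℕ} [NeZero m] {x γ ω : Fin m → R} (hγ : ∀ i, 0 ≤ γ i)
    (hx : ∀ i, x (i + 1) ≤ γ i * x i + ω i) :
    x 0 ≤ (∏ i, γ i) * x 0 + ∑ i, ω i * ∏ j ∈ Ioi i, γ j := by
  have hchain := le_prod_mul_add_sum_of_succ_le (x := fun n : ℕ => x n)
    (g := fun n : ℕ => γ n) (w := fun n : ℕ => ω n) (fun n => hγ n)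
    (fun n => by simpa using hx n) m
  simp only [Fin.natCast_self, Nat.cast_zero] at hchain
  rw [← Fin.prod_univ_eq_prod_range, ← Fin.sum_univ_eq_sum_range] at hchain
  simpa only [← Fin.prod_Ioi_eq_prod_Ico_val (fun j : ℕ => γ j), Fin.cast_val_eq_self]
    using hchain

theorem Fin.le_div_one_sub_prod_of_cyclic {R : Type*} [Field R] [LinearOrder R]
    [IsStrictOrderedRing R] {m : ℕ} [NeZero m] {x γ ω : Fin m → R} (hγ : ∀ i, 0 ≤ γ i)
    (hx : ∀ i, x (i + 1) ≤ γ i * x i + ω i) (hprod : ∏ i, γ i < 1) :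
    x 0 ≤ (∑ i, ω i * ∏ j ∈ Ioi i, γ j) / (1 - ∏ i, γ i) := by
  rw [le_div_iff₀ (sub_pos.mpr hprod)]
  linarith [Fin.le_prod_mul_add_sum_of_cyclic hγ hx]

theorem small_gain_general (m : ℕ) [NeZero m] (lam : ℝ)
    (s : Fin m → ℕ → ℝ)
    (γ ω : Fin m → ℝ) (hγ : ∀ i, 0 ≤ γ i)
    (harrow : ∀ (K : ℕ) (i : Fin m),
      (⨆ k : Fin (K + 1), lam ^ (-((k : ℕ) : ℤ)) * s (i + 1) k)
        ≤ γ i * (⨆ k : Fin (K + 1), lam ^ (-((k : ℕ) : ℤ)) * s i k) + ω i)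
    (hprod : ∏ i, γ i < 1) :
    ∀ k : ℕ, lam ^ (-(k : ℤ)) * s 0 k ≤
      (∑ i : Fin m, ω i * ∏ j ∈ Finset.univ.filter (fun j => i < j), γ j)
        / (1 - ∏ i, γ i) := by
  intro k
  have hsup := Fin.le_div_one_sub_prod_of_cyclic
    (x := fun i => ⨆ k' : Fin (k + 1), lam ^ (-((k' : ℕ) : ℤ)) * s i k') hγ (harrow k) hprod
  simpa [Finset.filter_lt_eq_Ioi] using
    (le_ciSup (Set.finite_range _).bddAbove (Fin.last k)).trans hsup

/-- Small gain theorem: for nonnegative sequences s i : ℕ → ℝ, i : Fin m (with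
s 0 playing the role of s¹ and i+1 the cyclic successor (i mod m)+1), if
‖s (i+1)‖^{λ,K} ≤ γ i ‖s i‖^{λ,K} + ω i for all K and the product of the γ's is < 1,
then ‖s 0‖^λ ≤ (∑ i, ω i ∏_{j > i} γ j) / (1 - ∏ γ). -/
theorem small_gain (m : ℕ) [NeZero m] (lam : ℝ) (hlam0 : 0 < lam) (hlam1 : lam < 1)
    (s : Fin m → ℕ → ℝ) (hs : ∀ i k, 0 ≤ s i k)
    (γ ω : Fin m → ℝ) (hγ : ∀ i, 0 ≤ γ i)
    (harrow : ∀ (K : ℕ) (i : Fin m),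
      (⨆ k : Fin (K + 1), lam ^ (-((k : ℕ) : ℤ)) * s (i + 1) k)
        ≤ γ i * (⨆ k : Fin (K + 1), lam ^ (-((k : ℕ) : ℤ)) * s i k) + ω i)
    (hprod : ∏ i, γ i < 1) :
    ∀ k : ℕ, lam ^ (-(k : ℤ)) * s 0 k ≤
      (∑ i : Fin m, ω i * ∏ j ∈ Finset.univ.filter (fun j => i < j), γ j)
        / (1 - ∏ i, γ i) :=
  small_gain_general m lam s γ ω hγ harrow hprod
end

section
/- If f : ℝⁿ → ℝ is convex, differentiable, and has L-Lipschitz continuous gradient, then its convex conjugate f* is (1/L)-strongly convex. -/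
/-!
Let `g` be a subgradient of `f*` at `y₂`. For a differentiable convex `f` the supremum defining
`f* (∇f x)` is attained at `x`; testing the subgradient inequality at `∇f g` therefore shows that
`g` maximizes `⟪y₂, ·⟫ - f`, so `∇f g = y₂` and `f* y₂ = ⟪y₂, g⟫ - f g`. Evaluating the supremum
defining `f* y₁` at the gradient step `g + L⁻¹ • (y₁ - y₂)` and bounding `f` there by the descent
lemma `f x' ≤ f x + ⟪∇f x, x' - x⟫ + L / 2 * ‖x' - x‖ ^ 2` yields the extra `‖y₁ - y₂‖² / (2L)`.
-/

open RealInnerProductSpace Set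

section Gradient

variable {E : Type*} [NormedAddCommGroup E] [InnerProductSpace ℝ E] [CompleteSpace E]
  {f : E → ℝ} {f' : E → E} {g x y v : E} {L : ℝ}

theorem HasGradientAt.hasDerivAt_comp_add_smul {t : ℝ} (hf : HasGradientAt f g (x + t • v)) :
    HasDerivAt (fun s : ℝ => f (x + s • v)) ⟪g, v⟫ t := by
  have hline : HasDerivAt (fun s : ℝ => x + s • v) v t := by
    simpa using ((hasDerivAt_id t).smul_const v).const_add x
  exact ((hasGradientAt_iff_hasFDerivAt.mp hf).comp_hasDerivAt t hline).congr_deriv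
    (InnerProductSpace.toDual_apply_apply ..)

theorem IsLocalMin.hasGradientAt_eq_zero (h : IsLocalMin f x) (hf : HasGradientAt f g x) :
    g = 0 := by
  simpa using h.hasFDerivAt_eq_zero (hasGradientAt_iff_hasFDerivAt.mp hf)

theorem HasGradientAt.eq_of_forall_add_inner_le (hf : HasGradientAt f g x)
    (hy : ∀ z, f x + ⟪y, z - x⟫ ≤ f z) : g = y := by
  have hmin : IsLocalMin (fun z => f z - ⟪y, z⟫) x :=
    Filter.Eventually.of_forall fun z => by
      have hz := hy z
      rw [inner_sub_right] at hz
      dsimp only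
      linarith
  have hder : HasGradientAt (fun z => f z - ⟪y, z⟫) (g - y) x := by
    rw [hasGradientAt_iff_hasFDerivAt, map_sub]
    exact (hasGradientAt_iff_hasFDerivAt.mp hf).sub (InnerProductSpace.toDual ℝ E y).hasFDerivAt
  exact sub_eq_zero.mp (hmin.hasGradientAt_eq_zero hder)

theorem ConvexOn.add_inner_le_of_hasGradientAt {s : Set E} (hconv : ConvexOn ℝ s f)
    (hx : x ∈ s) (hy : y ∈ s) (hf : HasGradientAt f g x) : f x + ⟪g, y - x⟫ ≤ f y := by
  have hcomp : f ∘ AffineMap.lineMap x y = fun t : ℝ => f (x + t • (y - x)) := by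
    ext t
    simp [AffineMap.lineMap_apply, add_comm]
  have hline := hcomp ▸ hconv.comp_affineMap (AffineMap.lineMap x y)
  have hslope := hline.le_slope_of_hasDerivAt (x := 0) (y := 1) (by simpa using hx)
    (by simpa using hy) one_pos (HasGradientAt.hasDerivAt_comp_add_smul (by simpa using hf))
  simp only [slope_def_field] at hslope
  norm_num at hslope
  linarith

theorem le_add_inner_add_sq_of_lipschitz_gradient (hgrad : ∀ x, HasGradientAt f (f' x) x)
    (hlip : ∀ x y, ‖f' x - f' y‖ ≤ L * ‖x - y‖) (x y : E) :
    f y ≤ f x + ⟪f' x, y - x⟫ + L / 2 * ‖y - x‖ ^ 2 := by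
  set v := y - x
  have hφ (t : ℝ) : HasDerivAt (fun s : ℝ => f (x + s • v)) ⟪f' (x + t • v), v⟫ t :=
    (hgrad _).hasDerivAt_comp_add_smul
  have hB (t : ℝ) : HasDerivAt (fun s : ℝ => f x + s * ⟪f' x, v⟫ + L / 2 * ‖v‖ ^ 2 * s ^ 2)
      (⟪f' x, v⟫ + L * ‖v‖ ^ 2 * t) t := by
    refine ((((hasDerivAt_id t).mul_const ⟪f' x, v⟫).const_add (f x)).add
      ((hasDerivAt_pow 2 t).const_mul (L / 2 * ‖v‖ ^ 2))).congr_deriv ?_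
    norm_num
    ring
  have hbound (t : ℝ) (ht : t ∈ Ico (0 : ℝ) 1) :
      ⟪f' (x + t • v), v⟫ ≤ ⟪f' x, v⟫ + L * ‖v‖ ^ 2 * t := calc
    ⟪f' (x + t • v), v⟫ = ⟪f' x, v⟫ + ⟪f' (x + t • v) - f' x, v⟫ := by
      rw [inner_sub_left]; ring
    _ ≤ ⟪f' x, v⟫ + ‖f' (x + t • v) - f' x‖ * ‖v‖ := by gcongr; exact real_inner_le_norm _ _
    _ ≤ ⟪f' x, v⟫ + L * ‖t • v‖ * ‖v‖ := by gcongr; simpa using hlip (x + t • v) x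
    _ = ⟪f' x, v⟫ + L * ‖v‖ ^ 2 * t := by rw [norm_smul, Real.norm_of_nonneg ht.1]; ring
  have h := image_le_of_deriv_right_le_deriv_boundary
    (fun t _ => (hφ t).continuousAt.continuousWithinAt) (fun t _ => (hφ t).hasDerivWithinAt)
    (by simp) (fun t _ => (hB t).continuousAt.continuousWithinAt)
    (fun t _ => (hB t).hasDerivWithinAt) hbound (right_mem_Icc.mpr zero_le_one)
  simpa [v] using h

theorem ConvexOn.isGreatest_inner_sub (hconv : ConvexOn ℝ univ f) (hf : HasGradientAt f g x) :
    IsGreatest {z | ∃ y, z = ⟪g, y⟫ - f y} (⟪g, x⟫ - f x) := by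
  refine ⟨⟨x, rfl⟩, ?_⟩
  rintro _ ⟨y, rfl⟩
  have hy := hconv.add_inner_le_of_hasGradientAt (mem_univ x) (mem_univ y) hf
  rw [inner_sub_right] at hy
  linarith

theorem inner_sub_add_sq_le_of_lipschitz_gradient (hL : 0 < L)
    (hgrad : ∀ x, HasGradientAt f (f' x) x) (hlip : ∀ x y, ‖f' x - f' y‖ ≤ L * ‖x - y‖)
    (x y : E) :
    ⟪y, x⟫ - f x + 1 / (2 * L) * ‖y - f' x‖ ^ 2 ≤
      ⟪y, x + L⁻¹ • (y - f' x)⟫ - f (x + L⁻¹ • (y - f' x)) := by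
  have h := le_add_inner_add_sq_of_lipschitz_gradient hgrad hlip x (x + L⁻¹ • (y - f' x))
  simp only [add_sub_cancel_left, norm_smul, inner_smul_right, inner_add_right,
    Real.norm_of_nonneg (inv_nonneg.mpr hL.le)] at h ⊢
  have hsq : ⟪y, y - f' x⟫ - ⟪f' x, y - f' x⟫ = ‖y - f' x‖ ^ 2 := by
    rw [← inner_sub_left, real_inner_self_eq_norm_sq]
  field_simp at h ⊢
  linarith

end Gradient

/-- If f is convex, differentiable with L-Lipschitz gradient, then its convex conjugate
f* is (1/L)-strongly convex (in the subgradient sense). -/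
theorem conjugate_strongly_convex_of_smooth (n : ℕ) (L : ℝ) (hL : 0 < L)
    (f : EuclideanSpace ℝ (Fin n) → ℝ)
    (f' : EuclideanSpace ℝ (Fin n) → EuclideanSpace ℝ (Fin n))
    (hgrad : ∀ x, HasGradientAt f (f' x) x)
    (hconv : ConvexOn ℝ Set.univ f)
    (hlip : ∀ x y, ‖f' x - f' y‖ ≤ L * ‖x - y‖)
    (fstar : EuclideanSpace ℝ (Fin n) → ℝ)
    (hfstar : ∀ y, IsLUB {z : ℝ | ∃ x, z = inner ℝ y x - f x} (fstar y)) :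
    ∀ y₁ y₂ g : EuclideanSpace ℝ (Fin n),
      (∀ z, fstar z ≥ fstar y₂ + inner ℝ g (z - y₂)) →
      fstar y₁ ≥ fstar y₂ + inner ℝ g (y₁ - y₂) + (1 / (2 * L)) * ‖y₁ - y₂‖ ^ 2 := by
  intro y₁ y₂ g hsub
  have hle_fstar (y x) : ⟪y, x⟫ - f x ≤ fstar y := (hfstar y).1 ⟨x, rfl⟩
  have hfstar_grad : fstar (f' g) = ⟪f' g, g⟫ - f g :=
    (hfstar _).unique (hconv.isGreatest_inner_sub (hgrad g)).isLUB
  have hfstar_y₂ : fstar y₂ = ⟪y₂, g⟫ - f g := by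
    refine le_antisymm ?_ (hle_fstar y₂ g)
    have hsub_grad := hsub (f' g)
    rw [hfstar_grad, inner_sub_right] at hsub_grad
    linarith [real_inner_comm g (f' g), real_inner_comm g y₂]
  have hgrad_g : f' g = y₂ := (hgrad g).eq_of_forall_add_inner_le fun x => by
    rw [inner_sub_right]
    linarith [hle_fstar y₂ x]
  have hstep := inner_sub_add_sq_le_of_lipschitz_gradient hL hgrad hlip g y₁
  rw [hgrad_g] at hstep
  rw [hfstar_y₂, inner_sub_right]
  linarith [hle_fstar y₁ (g + L⁻¹ • (y₁ - y₂)), real_inner_comm g y₁, real_inner_comm g y₂]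
end

section
/- Delayed-contraction sup estimate: Let λ ∈ (0,1), δ ≥ 0 with λ^B > δ, and suppose nonnegative sequences u, v satisfy u(k+1) ≤ δ·u(k+1-B) + ∑_{t=1}^{B} v(k+1-t) for all k ≥ B-1, with u(j)=v(j) given for j ≤ B-1 (and v(j)=0 for j<0). Then for all K, sup_{0≤k≤K} λ^{-k} u(k) ≤ [ (∑_{t=1}^B λ^{-t}) / (1 - δ/λ^B) ] · sup_{0≤k≤K} λ^{-k} v(k) + [ λ^B/(λ^B - δ) ] · ∑_{t=1}^{B} λ^{1-t} u(t-1). -/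
/-!
Write `W f k = λ⁻ᵏ f k` and `S f = max_{k ≤ K} W f k`. For `k < B` the weight `W u k` is one of the
terms of the initial sum `I = ∑_{t=1}^B λ^{1-t} u(t-1)`. For `k ≥ B` the recursion gives
`W u k ≤ (δ / λ^B) W u (k - B) + ∑_{t=1}^B λ⁻ᵗ W v (k - t)`, because delaying by `t` steps costs
exactly the factor `λ⁻ᵗ`. Taking the maximum over `k ≤ K`,
`S u ≤ (δ / λ^B) S u + P S v + I` with `P = ∑_{t=1}^B λ⁻ᵗ`, and `δ / λ^B < 1` lets us solve for `S u`.
-/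

open Finset

noncomputable def weightedSup (lam : ℝ) (f : ℕ → ℝ) (K : ℕ) : ℝ :=
  ⨆ k : Fin (K + 1), lam ^ (-((k : ℕ) : ℤ)) * f k

section WeightedSup

variable {lam : ℝ} {f : ℕ → ℝ} {K : ℕ}

lemma le_weightedSup {j : ℕ} (hj : j ≤ K) : lam ^ (-(j : ℤ)) * f j ≤ weightedSup lam f K :=
  le_ciSup (f := fun k : Fin (K + 1) => lam ^ (-((k : ℕ) : ℤ)) * f k)
    (Set.finite_range _).bddAbove ⟨j, Nat.lt_succ_of_le hj⟩

lemma weightedSup_le {c : ℝ} (h : ∀ k ≤ K, lam ^ (-(k : ℤ)) * f k ≤ c) :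
    weightedSup lam f K ≤ c :=
  ciSup_le fun k => h k (Nat.le_of_lt_succ k.isLt)

lemma weightedSup_nonneg (hlam : 0 < lam) (hf : ∀ k, 0 ≤ f k) : 0 ≤ weightedSup lam f K :=
  Real.iSup_nonneg fun _ => mul_nonneg (zpow_pos hlam _).le (hf _)

lemma zpow_neg_mul_delay_le_weightedSup (hlam : 0 < lam) {t k : ℕ} (htk : t ≤ k) (hk : k ≤ K) :
    lam ^ (-(k : ℤ)) * f (k - t) ≤ lam ^ (-(t : ℤ)) * weightedSup lam f K := by
  have hsplit : lam ^ (-(k : ℤ)) = lam ^ (-(t : ℤ)) * lam ^ (-((k - t : ℕ) : ℤ)) := by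
    rw [← zpow_add₀ hlam.ne']
    congr 1
    omega
  rw [hsplit, mul_assoc]
  exact mul_le_mul_of_nonneg_left (le_weightedSup (by omega)) (zpow_pos hlam _).le

end WeightedSup

section DelayedRecursion

variable {lam δ : ℝ} {B K : ℕ} {u v : ℕ → ℝ}

lemma zpow_neg_mul_le_initialSum (hlam : 0 < lam) (hu : ∀ k, 0 ≤ u k) {k : ℕ} (hk : k < B) :
    lam ^ (-(k : ℤ)) * u k ≤ ∑ t ∈ Icc 1 B, lam ^ ((1 : ℤ) - (t : ℤ)) * u (t - 1) := by
  have hterm : lam ^ ((1 : ℤ) - ((k + 1 : ℕ) : ℤ)) * u (k + 1 - 1) = lam ^ (-(k : ℤ)) * u k := by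
    push_cast
    ring_nf
  rw [← hterm]
  exact single_le_sum (f := fun t : ℕ => lam ^ ((1 : ℤ) - (t : ℤ)) * u (t - 1))
    (fun t _ => mul_nonneg (zpow_pos hlam _).le (hu _)) (mem_Icc.2 ⟨by omega, by omega⟩)

lemma zpow_neg_mul_le_of_delayed_le (hlam : 0 < lam) (hδ : 0 ≤ δ) {k : ℕ} (hBk : B ≤ k)
    (hkK : k ≤ K) (hrec : u k ≤ δ * u (k - B) + ∑ t ∈ Icc 1 B, v (k - t)) :
    lam ^ (-(k : ℤ)) * u k ≤
      δ / lam ^ B * weightedSup lam u K +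
        (∑ t ∈ Icc 1 B, lam ^ (-(t : ℤ))) * weightedSup lam v K :=
  calc lam ^ (-(k : ℤ)) * u k
      ≤ lam ^ (-(k : ℤ)) * (δ * u (k - B) + ∑ t ∈ Icc 1 B, v (k - t)) :=
        mul_le_mul_of_nonneg_left hrec (zpow_pos hlam _).le
    _ = δ * (lam ^ (-(k : ℤ)) * u (k - B)) + ∑ t ∈ Icc 1 B, lam ^ (-(k : ℤ)) * v (k - t) := by
        rw [mul_add, mul_sum]
        ring
    _ ≤ δ * (lam ^ (-(B : ℤ)) * weightedSup lam u K) +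
          ∑ t ∈ Icc 1 B, lam ^ (-(t : ℤ)) * weightedSup lam v K := by
        refine add_le_add (mul_le_mul_of_nonneg_left ?_ hδ) (sum_le_sum fun t ht => ?_)
        · exact zpow_neg_mul_delay_le_weightedSup hlam hBk hkK
        · exact zpow_neg_mul_delay_le_weightedSup hlam ((mem_Icc.1 ht).2.trans hBk) hkK
    _ = δ / lam ^ B * weightedSup lam u K +
          (∑ t ∈ Icc 1 B, lam ^ (-(t : ℤ))) * weightedSup lam v K := by
        rw [← sum_mul, zpow_neg, zpow_natCast]
        ring

lemma weightedSup_le_contraction (hlam : 0 < lam) (hδ : 0 ≤ δ) (hu : ∀ k, 0 ≤ u k)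
    (hv : ∀ k, 0 ≤ v k)
    (hrec : ∀ k, B ≤ k → u k ≤ δ * u (k - B) + ∑ t ∈ Icc 1 B, v (k - t)) :
    weightedSup lam u K ≤
      δ / lam ^ B * weightedSup lam u K +
        ((∑ t ∈ Icc 1 B, lam ^ (-(t : ℤ))) * weightedSup lam v K +
          ∑ t ∈ Icc 1 B, lam ^ ((1 : ℤ) - (t : ℤ)) * u (t - 1)) := by
  have hP : 0 ≤ ∑ t ∈ Icc 1 B, lam ^ (-(t : ℤ)) := sum_nonneg fun t _ => (zpow_pos hlam _).le
  have hI : 0 ≤ ∑ t ∈ Icc 1 B, lam ^ ((1 : ℤ) - (t : ℤ)) * u (t - 1) :=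
    sum_nonneg fun t _ => mul_nonneg (zpow_pos hlam _).le (hu _)
  refine weightedSup_le fun k hkK => ?_
  rcases lt_or_ge k B with hkB | hBk
  · have hrest : 0 ≤ δ / lam ^ B * weightedSup lam u K +
        (∑ t ∈ Icc 1 B, lam ^ (-(t : ℤ))) * weightedSup lam v K := by
      have := weightedSup_nonneg (K := K) hlam hu
      have := weightedSup_nonneg (K := K) hlam hv
      positivity
    linarith [zpow_neg_mul_le_initialSum hlam hu hkB]
  · linarith [zpow_neg_mul_le_of_delayed_le hlam hδ hBk hkK (hrec k hBk)]

end DelayedRecursion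

theorem delayed_contraction_sup_general (B : ℕ) (hB : 1 ≤ B) (lam δ : ℝ)
    (hδ0 : 0 ≤ δ) (hlam0 : 0 < lam)
    (hgap : δ < lam ^ B)
    (u v : ℕ → ℝ) (hu : ∀ k, 0 ≤ u k) (hv : ∀ k, 0 ≤ v k)
    (hrec : ∀ k : ℕ, B - 1 ≤ k →
      u (k + 1) ≤ δ * u (k + 1 - B) + ∑ t ∈ Finset.Icc 1 B, v (k + 1 - t)) :
    ∀ K : ℕ,
      (⨆ k : Fin (K + 1), lam ^ (-((k : ℕ) : ℤ)) * u k)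
        ≤ ((∑ t ∈ Finset.Icc 1 B, lam ^ (-(t : ℤ))) / (1 - δ / lam ^ B)) *
            (⨆ k : Fin (K + 1), lam ^ (-((k : ℕ) : ℤ)) * v k)
          + (lam ^ B / (lam ^ B - δ)) *
            ∑ t ∈ Finset.Icc 1 B, lam ^ ((1 : ℤ) - (t : ℤ)) * u (t - 1) := by
  intro K
  have hrec' : ∀ k, B ≤ k → u k ≤ δ * u (k - B) + ∑ t ∈ Icc 1 B, v (k - t) := by
    intro k hBk
    obtain ⟨m, rfl⟩ : ∃ m, k = m + 1 := ⟨k - 1, by omega⟩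
    exact hrec m (by omega)
  have hself := weightedSup_le_contraction (K := K) hlam0 hδ0 hu hv hrec'
  have hcontr : 0 < 1 - δ / lam ^ B := by rw [sub_pos, div_lt_one (pow_pos hlam0 B)]; exact hgap
  change weightedSup lam u K ≤ _ * weightedSup lam v K + _
  calc weightedSup lam u K
      ≤ ((∑ t ∈ Icc 1 B, lam ^ (-(t : ℤ))) * weightedSup lam v K +
          ∑ t ∈ Icc 1 B, lam ^ ((1 : ℤ) - (t : ℤ)) * u (t - 1)) / (1 - δ / lam ^ B) := by
        rw [le_div_iff₀ hcontr]
        linarith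
    _ = _ := by
        field_simp

/-- Delayed-contraction sup estimate. -/
theorem delayed_contraction_sup (B : ℕ) (hB : 1 ≤ B) (lam δ : ℝ)
    (hδ0 : 0 ≤ δ) (hδ1 : δ < 1) (hlam1 : lam < 1) (hlam0 : 0 < lam)
    (hgap : δ < lam ^ B)
    (u v : ℕ → ℝ) (hu : ∀ k, 0 ≤ u k) (hv : ∀ k, 0 ≤ v k)
    (hrec : ∀ k : ℕ, B - 1 ≤ k →
      u (k + 1) ≤ δ * u (k + 1 - B) + ∑ t ∈ Finset.Icc 1 B, v (k + 1 - t)) :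
    ∀ K : ℕ,
      (⨆ k : Fin (K + 1), lam ^ (-((k : ℕ) : ℤ)) * u k)
        ≤ ((∑ t ∈ Finset.Icc 1 B, lam ^ (-(t : ℤ))) / (1 - δ / lam ^ B)) *
            (⨆ k : Fin (K + 1), lam ^ (-((k : ℕ) : ℤ)) * v k)
          + (lam ^ B / (lam ^ B - δ)) *
            ∑ t ∈ Finset.Icc 1 B, lam ^ ((1 : ℤ) - (t : ℤ)) * u (t - 1) :=
  delayed_contraction_sup_general B hB lam δ hδ0 hlam0 hgap u v hu hv hrec
end

section
/- Existence of a valid step-size/rate pair: Let 0 ≤ δ < 1, B ≥ 1 an integer, and κ ≥ 1. Define λ_c̄^B := (δ + √(δ² + (4κ^{3/2} - δ²)(1 + 4κ^{3/2})))/(1 + 4κ^{3/2}). Then δ < λ_c̄^B < 1, i.e., the solution of the quadratic ((1/2) + 2κ^{3/2}) s² - δ s + δ²/2 - 2κ^{3/2} = 0 in s = λ^B lies strictly between δ and 1. -/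
/-- The root λ_c̄^B of the quadratic ((1/2)+2κ^{3/2}) s² - δ s + δ²/2 - 2κ^{3/2} = 0
lies strictly between δ and 1. -/
theorem valid_rate_exists (δ κ : ℝ) (hδ0 : 0 ≤ δ) (hδ1 : δ < 1) (hκ : 1 ≤ κ) :
    let s := (δ + Real.sqrt (δ ^ 2 + (4 * κ ^ ((3 : ℝ) / 2) - δ ^ 2) *
      (1 + 4 * κ ^ ((3 : ℝ) / 2)))) / (1 + 4 * κ ^ ((3 : ℝ) / 2))
    δ < s ∧ s < 1 ∧
      ((1 / 2 : ℝ) + 2 * κ ^ ((3 : ℝ) / 2)) * s ^ 2 - δ * s + δ ^ 2 / 2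
        - 2 * κ ^ ((3 : ℝ) / 2) = 0 := by
  intro s
  set K := κ ^ ((3 : ℝ) / 2) with hKdef
  have hK : 1 ≤ K := Real.one_le_rpow hκ (by norm_num)
  have ha : (0 : ℝ) < 1 + 4 * K := by linarith
  have hδ2 : δ ^ 2 < 1 := by nlinarith
  have hD : 0 ≤ δ ^ 2 + (4 * K - δ ^ 2) * (1 + 4 * K) := by nlinarith
  set r := Real.sqrt (δ ^ 2 + (4 * K - δ ^ 2) * (1 + 4 * K)) with hrdef
  have hr0 : 0 ≤ r := Real.sqrt_nonneg _
  have hr2 : r ^ 2 = δ ^ 2 + (4 * K - δ ^ 2) * (1 + 4 * K) := Real.sq_sqrt hD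
  have hs : s = (δ + r) / (1 + 4 * K) := rfl
  have h1 : δ < s := by
    rw [hs, lt_div_iff₀ ha]
    have hsq : (4 * K * δ) ^ 2 < r ^ 2 := by
      nlinarith [hr2, mul_pos (show (0:ℝ) < 1 - δ ^ 2 by linarith)
        (show (0:ℝ) < K * (1 + 4 * K) by nlinarith)]
    have := lt_of_pow_lt_pow_left₀ 2 hr0 hsq
    nlinarith
  have h2 : s < 1 := by
    rw [hs, div_lt_one ha]
    have hsq : r ^ 2 < (1 + 4 * K - δ) ^ 2 := by
      nlinarith [hr2, mul_pos ha (pow_pos (show (0:ℝ) < 1 - δ by linarith) 2)]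
    have := lt_of_pow_lt_pow_left₀ 2 (show (0:ℝ) ≤ 1 + 4 * K - δ by linarith) hsq
    linarith
  refine ⟨h1, h2, ?_⟩
  rw [hs]
  field_simp
  nlinarith [hr2, sq_nonneg r]
end
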